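/- arXiv:2602.17859 — 2 statements merged into one kernel-verified Lean document; each statement's English description precedes it below -/
import Mathlib

section
/- Let n ≥ 4 be an integer. If K is an isometric filling of the cycle graph C_n, then the number of vertices of K satisfies |V(K)| ≥ n²/8. -/
/-!
Take the base point `b = f 0` and, for `1 ≤ k ≤ n / 2`, the levels of `d_K(b, ·)`. Because `K` is
isometric on the boundary, the only boundary edges from level `k - 1` to level `k` are
`{f (k - 1), f k}` and `{f (n - k + 1), f (n - k)}`. In the incidence graph between such crossing
pairs and triangles, a crossing pair has as many neighbours as triangles containing it, while a
triangle has an even number of neighbours (its vertices split `1 + 2` between the two levels).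
So the odd-degree vertices are exactly the boundary crossing edges, and by the handshake lemma,
applied to one component, the two of them are connected. Following that connection gives a path
from `f k` to `f (n - k)` inside the sphere of radius `k`, which therefore has at least
`d_K(f k, f (n - k)) + 1 = min (2k) (n - 2k) + 1` vertices. Summing over the disjoint spheres gives
`n² / 8`.
-/

open SimpleGraph Finset

/-- An abstract triangulation: a finite nonempty set of triangles (3-element
vertex sets) such that every edge (2-element subset of a triangle) lies in
exactly 1 or 2 triangles. -/
structure AbstractTriangulation (V : Type) [DecidableEq V] [Fintype V] where
  tris : Finset (Finset V)
  tris_nonempty : tris.Nonempty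
  card_three : ∀ t ∈ tris, t.card = 3
  edge_mem : ∀ e : Finset V, e.card = 2 → (∃ t ∈ tris, e ⊆ t) →
    (tris.filter fun t => e ⊆ t).card = 1 ∨ (tris.filter fun t => e ⊆ t).card = 2

namespace AbstractTriangulation

variable {V : Type} [DecidableEq V] [Fintype V]

/-- The vertex set `V(K)`: vertices lying in some triangle. -/
def verts (K : AbstractTriangulation V) : Finset V := K.tris.biUnion id

/-- The edge set `E(K)`: 2-element subsets of triangles. -/
def edges (K : AbstractTriangulation V) : Finset (Finset V) :=
  K.tris.biUnion fun t => t.powersetCard 2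

/-- The 1-skeleton of `K`: `u,v` adjacent iff `{u,v}` is an edge of `K`. -/
def skeleton (K : AbstractTriangulation V) : SimpleGraph V where
  Adj u v := u ≠ v ∧ ∃ t ∈ K.tris, u ∈ t ∧ v ∈ t
  symm := by constructor; rintro u v ⟨h, t, ht, hu, hv⟩; exact ⟨h.symm, t, ht, hv, hu⟩
  loopless := by constructor; rintro u ⟨h, -⟩; exact h rfl

/-- The boundary `∂K`: the graph on the vertices of `K` whose edges are the
edges of `K` contained in exactly one triangle. -/
def boundary (K : AbstractTriangulation V) : SimpleGraph V where
  Adj u v := u ≠ v ∧ (K.tris.filter fun t => u ∈ t ∧ v ∈ t).card = 1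
  symm := by
    constructor
    rintro u v ⟨h, hc⟩
    exact ⟨h.symm, by simpa [and_comm] using hc⟩
  loopless := by constructor; rintro u ⟨h, -⟩; exact h rfl

/-- `∂K` is (isomorphic to) the cycle `C_n`, with the identification given by
`f : Fin n → V`: `f` is injective, boundary adjacency corresponds exactly to
cycle adjacency, and every boundary edge joins two vertices in the image of `f`. -/
def BoundaryIsCycle (K : AbstractTriangulation V) (n : ℕ) (f : Fin n → V) : Prop :=
  Function.Injective f ∧
  (∀ i j : Fin n, K.boundary.Adj (f i) (f j) ↔ (cycleGraph n).Adj i j) ∧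
  (∀ u v : V, K.boundary.Adj u v → (∃ i, u = f i) ∧ (∃ j, v = f j))

/-- `K` is a `δ`-Lipschitz filling of `C_n` (with boundary identification `f`):
`∂K = C_n` and `d_K(x,y) ≥ δ · d_{C_n}(x,y)` for all boundary vertices, expressed
by the fact that every walk in the 1-skeleton between boundary vertices has
length at least `δ · d_{C_n}(x,y)`. -/
def IsLipschitzFilling (K : AbstractTriangulation V) (n : ℕ) (δ : ℝ)
    (f : Fin n → V) : Prop :=
  K.BoundaryIsCycle n f ∧
  ∀ (i j : Fin n) (p : K.skeleton.Walk (f i) (f j)),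
    δ * ((cycleGraph n).dist i j : ℝ) ≤ (p.length : ℝ)

end AbstractTriangulation

namespace AbstractTriangulation

/-- `K` is an isometric filling of `C_n` (with boundary identification `f`):
`∂K = C_n` and `d_K(x,y) = d_{C_n}(x,y)` for all boundary vertices. -/
def IsIsometricFilling {V : Type} [DecidableEq V] [Fintype V]
    (K : AbstractTriangulation V) (n : ℕ) (f : Fin n → V) : Prop :=
  K.BoundaryIsCycle n f ∧
  ∀ i j : Fin n, K.skeleton.dist (f i) (f j) = (SimpleGraph.cycleGraph n).dist i j

end AbstractTriangulation

theorem Fin.val_sub_add_val_eq_or {n : ℕ} (a b : Fin n) :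
    (a - b).val + b.val = a.val ∨ (a - b).val + b.val = a.val + n := by
  rcases le_or_gt b a with h | h
  · rw [Fin.sub_val_of_le h]
    have : b.val ≤ a.val := h
    omega
  · rw [Fin.coe_sub_iff_lt.mpr h]
    have : a.val < b.val := h
    omega

namespace SimpleGraph

variable {α : Type*} {G : SimpleGraph α}

theorem exists_reachable_ne_odd_degree [Fintype α] [DecidableRel G.Adj] {v : α}
    (hv : Odd (G.degree v)) : ∃ w, w ≠ v ∧ G.Reachable v w ∧ Odd (G.degree w) := by
  classical
  let H : SimpleGraph α :=
    { Adj a c := G.Adj a c ∧ G.Reachable v a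
      symm := ⟨fun _ _ h => ⟨h.1.symm, h.2.trans h.1.reachable⟩⟩
      loopless := ⟨fun _ h => h.1.ne rfl⟩ }
  have hdeg : ∀ a, H.degree a = if G.Reachable v a then G.degree a else 0 := by
    intro a
    rw [← card_neighborFinset_eq_degree, ← card_neighborFinset_eq_degree]
    split_ifs with ha
    · congr 1
      ext c
      simp [H, ha]
    · rw [card_eq_zero, eq_empty_iff_forall_notMem]
      simp [H, ha]
  obtain ⟨w, hwv, hw⟩ := H.exists_ne_odd_degree_of_exists_odd_degree v (by simpa [hdeg] using hv)
  rw [hdeg] at hw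
  split_ifs at hw with hvw
  · exact ⟨w, hwv, hvw, hw⟩
  · exact absurd hw (by decide)

theorem dist_add_one_le_card {H : SimpleGraph α} (hHG : H ≤ G) {x y : α} (hxy : H.Reachable x y)
    {s : Finset α} (hs : ∀ v, H.Reachable x v → v ∈ s) : G.dist x y + 1 ≤ s.card := by
  classical
  obtain ⟨p⟩ := hxy
  let q := p.toPath
  have hsub : (q : H.Walk x y).support.toFinset ⊆ s := fun v hv =>
    hs v ⟨(q : H.Walk x y).takeUntil v (List.mem_toFinset.mp hv)⟩
  calc G.dist x y + 1 ≤ (q : H.Walk x y).length + 1 := by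
        simpa using dist_le ((q : H.Walk x y).mapLe hHG)
    _ = (q : H.Walk x y).support.toFinset.card := by
        rw [List.toFinset_card_of_nodup q.2.support_nodup, Walk.length_support]
    _ ≤ s.card := card_le_card hsub

theorem Walk.le_add_length {φ : α → ℕ} (hφ : ∀ u w, G.Adj u w → φ u ≤ φ w + 1) {u v : α}
    (p : G.Walk u v) : φ u ≤ φ v + p.length := by
  induction p with
  | nil => simp
  | cons h _ ih =>
    have := hφ _ _ h
    rw [Walk.length_cons]
    omega

variable {n : ℕ}

theorem cycleGraph_dist_add_one_le [NeZero n] (x : Fin n) :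
    (cycleGraph n).dist x (x + 1) ≤ 1 := by
  obtain _ | _ | n := n
  · exact absurd rfl (NeZero.ne 0)
  · simp
  · exact (dist_eq_one_iff_adj.mpr (by simp [cycleGraph_adj])).le

open Fin.NatCast in
theorem cycleGraph_dist_le_val_sub [NeZero n] (i j : Fin n) :
    (cycleGraph n).dist i j ≤ (j - i).val := by
  suffices h : ∀ (a : ℕ) (i : Fin n), (cycleGraph n).dist i (i + (a : Fin n)) ≤ a by
    simpa using h (j - i).val i
  intro a
  induction a with
  | zero => simp
  | succ a ih =>
    intro i
    calc (cycleGraph n).dist i (i + ((a + 1 : ℕ) : Fin n))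
        = (cycleGraph n).dist i (i + a + 1) := by rw [Nat.cast_succ, add_assoc]
      _ ≤ (cycleGraph n).dist i (i + a) + (cycleGraph n).dist (i + a) (i + a + 1) :=
        (cycleGraph_preconnected _ _).dist_triangle_right i
      _ ≤ a + 1 := add_le_add (ih i) (cycleGraph_dist_add_one_le _)

theorem min_val_sub_le_cycleGraph_dist (i j : Fin n) :
    min (j - i).val (i - j).val ≤ (cycleGraph n).dist i j := by
  obtain ⟨p, hp⟩ := (cycleGraph_preconnected i j).exists_walk_length_eq_dist
  have key := p.le_add_length (φ := fun x => min (j - x).val (x - j).val) fun u w h => by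
    rw [cycleGraph_adj'] at h
    have := Fin.val_sub_add_val_eq_or j u; have := Fin.val_sub_add_val_eq_or u j
    have := Fin.val_sub_add_val_eq_or j w; have := Fin.val_sub_add_val_eq_or w j
    have := Fin.val_sub_add_val_eq_or u w; have := Fin.val_sub_add_val_eq_or w u
    have := u.isLt; have := w.isLt; have := j.isLt
    omega
  have hjj : (j - j).val = 0 := by simp [Fin.sub_val_of_le le_rfl]
  simp only [hjj, hp, min_self, zero_add] at key
  exact key

theorem cycleGraph_dist_eq [NeZero n] (i j : Fin n) :
    (cycleGraph n).dist i j = min (j - i).val (i - j).val :=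
  le_antisymm (le_min (cycleGraph_dist_le_val_sub i j) (dist_comm (G := cycleGraph n) ▸
    cycleGraph_dist_le_val_sub j i)) (min_val_sub_le_cycleGraph_dist i j)

end SimpleGraph

namespace AbstractTriangulation

variable {V : Type} [DecidableEq V] [Fintype V] (K : AbstractTriangulation V)

theorem mem_verts {v : V} : v ∈ K.verts ↔ ∃ t ∈ K.tris, v ∈ t := by
  simp [verts]

theorem skeleton_adj_of_mem {t : Finset V} (ht : t ∈ K.tris) {u v : V} (hu : u ∈ t) (hv : v ∈ t)
    (huv : u ≠ v) : K.skeleton.Adj u v :=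
  ⟨huv, t, ht, hu, hv⟩

theorem mem_verts_of_skeleton_adj {u v : V} (h : K.skeleton.Adj u v) : v ∈ K.verts :=
  let ⟨_, t, ht, _, hv⟩ := h
  K.mem_verts.mpr ⟨t, ht, hv⟩

theorem boundary_adj_iff {u v : V} :
    K.boundary.Adj u v ↔ u ≠ v ∧ #{t ∈ K.tris | {u, v} ⊆ t} = 1 := by
  simp [boundary, insert_subset_iff]

theorem dist_le_dist_add_one_of_mem (b : V) {t : Finset V} (ht : t ∈ K.tris) {u w : V}
    (hu : u ∈ t) (hw : w ∈ t) : K.skeleton.dist b w ≤ K.skeleton.dist b u + 1 := by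
  by_cases huw : u = w
  · subst huw
    omega
  · rcases (K.skeleton_adj_of_mem ht hu hw huw).diff_dist_adj (u := b) with h | h | h <;> omega

variable (b : V) (k : ℕ)

noncomputable def sphere : Finset V :=
  {v ∈ K.verts | K.skeleton.dist b v = k}

noncomputable def sphereGraph : SimpleGraph V where
  Adj u v := K.skeleton.Adj u v ∧ K.skeleton.dist b u = k ∧ K.skeleton.dist b v = k
  symm := ⟨fun _ _ ⟨h, hu, hv⟩ => ⟨h.symm, hv, hu⟩⟩
  loopless := ⟨fun _ h => h.1.ne rfl⟩

-- `e` need not be an edge of `K`: a pair in no triangle is isolated in `crossingIncidence`.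
def IsCrossingPair (e : Finset V) : Prop :=
  ∃ u v, K.skeleton.dist b u + 1 = k ∧ K.skeleton.dist b v = k ∧ e = {u, v}

variable {K b k}

theorem IsCrossingPair.card_eq_two {e : Finset V} (he : K.IsCrossingPair b k e) : #e = 2 := by
  obtain ⟨u, v, hu, hv, rfl⟩ := he
  exact card_pair (by rintro rfl; omega)

theorem IsCrossingPair.notMem_tris {e : Finset V} (he : K.IsCrossingPair b k e) :
    e ∉ K.tris := fun h => by
  have := K.card_three e h
  rw [he.card_eq_two] at this
  omega

variable (K b k)

def crossingIncidence : SimpleGraph (Finset V) where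
  Adj x y := (K.IsCrossingPair b k x ∧ y ∈ K.tris ∧ x ⊆ y) ∨
    (K.IsCrossingPair b k y ∧ x ∈ K.tris ∧ y ⊆ x)
  symm := ⟨fun _ _ h => h.symm⟩
  loopless := ⟨fun _ h => by rcases h with ⟨hx, ht, -⟩ | ⟨hx, ht, -⟩ <;> exact hx.notMem_tris ht⟩

variable {K b k}

theorem degree_crossingIncidence_of_isCrossingPair [DecidableRel (K.crossingIncidence b k).Adj]
    {e : Finset V} (he : K.IsCrossingPair b k e) :
    (K.crossingIncidence b k).degree e = #{t ∈ K.tris | e ⊆ t} := by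
  rw [← card_neighborFinset_eq_degree]
  congr 1
  ext t
  rw [mem_neighborFinset, mem_filter]
  simp only [crossingIncidence]
  constructor
  · rintro (⟨-, ht, hsub⟩ | ⟨-, het, -⟩)
    · exact ⟨ht, hsub⟩
    · exact absurd het he.notMem_tris
  · rintro ⟨ht, hsub⟩
    exact Or.inl ⟨he, ht, hsub⟩

theorem neighborFinset_crossingIncidence_of_mem_tris
    [DecidableRel (K.crossingIncidence b k).Adj] {t : Finset V} (ht : t ∈ K.tris) :
    (K.crossingIncidence b k).neighborFinset t =
      ({u ∈ t | K.skeleton.dist b u + 1 = k} ×ˢ {v ∈ t | K.skeleton.dist b v = k}).image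
        fun p => {p.1, p.2} := by
  ext e
  rw [mem_neighborFinset]
  simp only [crossingIncidence, mem_image, mem_product, mem_filter,
    Prod.exists]
  constructor
  · rintro (⟨ht', -, -⟩ | ⟨⟨u, v, hu, hv, rfl⟩, -, hsub⟩)
    · exact absurd ht ht'.notMem_tris
    · exact ⟨u, v, ⟨⟨hsub (by simp), hu⟩, hsub (by simp), hv⟩, rfl⟩
  · rintro ⟨u, v, ⟨⟨hut, hu⟩, hvt, hv⟩, rfl⟩
    exact Or.inr ⟨⟨u, v, hu, hv, rfl⟩, ht, insert_subset hut (singleton_subset_iff.mpr hvt)⟩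

theorem card_levels_of_mem_tris {t : Finset V} (ht : t ∈ K.tris) {a c : V} (ha : a ∈ t)
    (hda : K.skeleton.dist b a + 1 = k) (hc : c ∈ t) (hdc : K.skeleton.dist b c = k) :
    #{u ∈ t | K.skeleton.dist b u + 1 = k} + #{v ∈ t | K.skeleton.dist b v = k} = 3 := by
  have hlevels : {v ∈ t | K.skeleton.dist b v = k} = {u ∈ t | ¬K.skeleton.dist b u + 1 = k} :=
    filter_congr fun w hw => by
      have := K.dist_le_dist_add_one_of_mem b ht ha hw
      have := K.dist_le_dist_add_one_of_mem b ht hw hc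
      omega
  rw [hlevels, card_filter_add_card_filter_not, K.card_three t ht]

theorem even_degree_crossingIncidence_of_mem_tris [DecidableRel (K.crossingIncidence b k).Adj]
    {t : Finset V} (ht : t ∈ K.tris) : Even ((K.crossingIncidence b k).degree t) := by
  have hinj : Set.InjOn (fun p : V × V => ({p.1, p.2} : Finset V))
      ({u ∈ t | K.skeleton.dist b u + 1 = k} ×ˢ {v ∈ t | K.skeleton.dist b v = k} : Finset _) := by
    rintro ⟨a, c⟩ hac ⟨a', c'⟩ hac' (heq : ({a, c} : Finset V) = {a', c'})
    simp only [coe_product, coe_filter, Set.mem_prod, Set.mem_ofPred_eq] at hac hac'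
    have ha : a ∈ ({a', c'} : Finset V) := heq ▸ mem_insert_self a {c}
    have hc : c ∈ ({a', c'} : Finset V) := heq ▸ mem_insert_of_mem (mem_singleton_self c)
    simp only [mem_insert, mem_singleton] at ha hc
    rcases ha with rfl | rfl <;> rcases hc with rfl | rfl <;> first | rfl | omega
  rw [← card_neighborFinset_eq_degree, neighborFinset_crossingIncidence_of_mem_tris ht,
    card_image_of_injOn hinj, card_product, Nat.even_mul]
  by_cases hA : ∃ a ∈ t, K.skeleton.dist b a + 1 = k
  · by_cases hC : ∃ c ∈ t, K.skeleton.dist b c = k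
    · obtain ⟨a, ha, hda⟩ := hA
      obtain ⟨c, hc, hdc⟩ := hC
      have := card_levels_of_mem_tris ht ha hda hc hdc
      simp only [Nat.even_iff]
      omega
    · right
      rw [filter_false_of_mem (by simpa using hC)]
      simp
  · left
    rw [filter_false_of_mem (by simpa using hA)]
    simp

theorem exists_isCrossingPair_reachable {e₀ : Finset V} (he₀ : K.IsCrossingPair b k e₀)
    (h₀ : #{t ∈ K.tris | e₀ ⊆ t} = 1) :
    ∃ e, e ≠ e₀ ∧ (K.crossingIncidence b k).Reachable e₀ e ∧ K.IsCrossingPair b k e ∧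
      #{t ∈ K.tris | e ⊆ t} = 1 := by
  classical
  obtain ⟨e, hne, hreach, hodd⟩ := (K.crossingIncidence b k).exists_reachable_ne_odd_degree
    (v := e₀) (by rw [degree_crossingIncidence_of_isCrossingPair he₀, h₀]; decide)
  obtain ⟨t, hadj⟩ := ((K.crossingIncidence b k).degree_pos_iff_exists_adj e).mp hodd.pos
  have he : K.IsCrossingPair b k e := by
    rcases hadj with ⟨he, -⟩ | ⟨-, het, -⟩
    · exact he
    · exact absurd (even_degree_crossingIncidence_of_mem_tris het) (Nat.not_even_iff_odd.mpr hodd)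
  rw [degree_crossingIncidence_of_isCrossingPair he] at hodd
  obtain ⟨t, ht⟩ := card_pos.mp hodd.pos
  rcases K.edge_mem e he.card_eq_two ⟨t, (mem_filter.mp ht)⟩ with h | h
  · exact ⟨e, hne, hreach, he, h⟩
  · rw [h] at hodd
    exact absurd hodd (by decide)

theorem sphereGraph_reachable_of_reachable {e₀ e : Finset V}
    (h : (K.crossingIncidence b k).Reachable e₀ e) (he₀ : K.IsCrossingPair b k e₀) {v₀ v : V}
    (hv₀ : v₀ ∈ e₀) (hd₀ : K.skeleton.dist b v₀ = k) (hv : v ∈ e) (hd : K.skeleton.dist b v = k) :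
    (K.sphereGraph b k).Reachable v₀ v := by
  suffices key : ∀ x, (K.crossingIncidence b k).Reachable e₀ x →
      ∀ v ∈ x, K.skeleton.dist b v = k → (K.sphereGraph b k).Reachable v₀ v from key e h v hv hd
  intro x hx
  rw [reachable_iff_reflTransGen] at hx
  induction hx with
  | refl =>
    obtain ⟨u, w, hu, hw, rfl⟩ := he₀
    have hlevel : ∀ y ∈ ({u, w} : Finset V), K.skeleton.dist b y = k → y = w := by
      simp only [mem_insert, mem_singleton]
      rintro y (rfl | rfl) hy <;> first | rfl | omega
    rintro v hv hd
    rw [hlevel v hv hd, ← hlevel v₀ hv₀ hd₀]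
  | tail _ hyz ih =>
    rcases hyz with ⟨⟨u, w, hu, hw, rfl⟩, ht, hsub⟩ | ⟨-, -, hsub⟩
    · intro v hv hd
      have hwv := ih w (by simp) hw
      by_cases hvw : w = v
      · exact hvw ▸ hwv
      · exact hwv.trans (Adj.reachable ⟨K.skeleton_adj_of_mem ht (hsub (by simp)) hv hvw, hw, hd⟩)
    · exact fun v hv hd => ih v (hsub hv) hd

theorem dist_add_one_le_card_sphere {x y : V} (hxy : (K.sphereGraph b k).Reachable x y)
    (hx : x ∈ K.sphere b k) : K.skeleton.dist x y + 1 ≤ #(K.sphere b k) :=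
  dist_add_one_le_card (H := K.sphereGraph b k) (fun _ _ h => h.1) hxy fun v hv => by
    rw [reachable_iff_reflTransGen] at hv
    induction hv with
    | refl => exact hx
    | tail _ h _ => exact mem_filter.mpr ⟨K.mem_verts_of_skeleton_adj h.1, h.2.2⟩

variable (K b)

theorem sum_card_sphere_le (s : Finset ℕ) : ∑ k ∈ s, #(K.sphere b k) ≤ #K.verts := by
  simp only [sphere]
  rw [sum_card_fiberwise_eq_card_filter]
  exact card_filter_le _ _

end AbstractTriangulation

namespace AbstractTriangulation.IsIsometricFilling

variable {V : Type} [DecidableEq V] [Fintype V] {K : AbstractTriangulation V} {n : ℕ}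
  {f : Fin n → V} [NeZero n]

theorem dist_zero_left (hK : K.IsIsometricFilling n f) (i : Fin n) :
    K.skeleton.dist (f 0) (f i) = min i.val (n - i.val) := by
  rw [hK.2, cycleGraph_dist_eq, sub_zero]
  have := Fin.val_sub_add_val_eq_or 0 i
  have := (0 - i).isLt
  simp only [Fin.val_zero] at *
  omega

theorem boundaryEdge_isCrossingPair (hK : K.IsIsometricFilling n f) {k : ℕ} (hk : 1 ≤ k)
    (hkn : 2 * k ≤ n) :
    K.IsCrossingPair (f 0) k {f ⟨k - 1, by omega⟩, f ⟨k, by omega⟩} ∧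
      #{t ∈ K.tris | {f ⟨k - 1, by omega⟩, f ⟨k, by omega⟩} ⊆ t} = 1 := by
  refine ⟨⟨_, _, ?_, ?_, rfl⟩, (K.boundary_adj_iff.mp ((hK.1.2.1 _ _).mpr ?_)).2⟩
  · rw [hK.dist_zero_left]
    simp only
    omega
  · rw [hK.dist_zero_left]
    simp only
    omega
  · rw [cycleGraph_adj']
    right
    rw [Fin.sub_val_of_le (by simp [Fin.le_def])]
    simp only
    omega

theorem eq_or_mem_of_isCrossingPair (hK : K.IsIsometricFilling n f) {k : ℕ} (hk : 1 ≤ k)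
    (hkn : 2 * k ≤ n) {e : Finset V} (he : K.IsCrossingPair (f 0) k e)
    (h1 : #{t ∈ K.tris | e ⊆ t} = 1) :
    e = {f ⟨k - 1, by omega⟩, f ⟨k, by omega⟩} ∨ f ⟨n - k, by omega⟩ ∈ e := by
  obtain ⟨u, v, hu, hv, rfl⟩ := he
  have hadj : K.boundary.Adj u v := K.boundary_adj_iff.mpr ⟨by rintro rfl; omega, h1⟩
  obtain ⟨⟨i, rfl⟩, ⟨j, rfl⟩⟩ := hK.1.2.2 _ _ hadj
  have hij := (hK.1.2.1 i j).mp hadj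
  rw [cycleGraph_adj'] at hij
  rw [hK.dist_zero_left] at hu hv
  have := Fin.val_sub_add_val_eq_or i j
  have := Fin.val_sub_add_val_eq_or j i
  have := i.isLt
  have := j.isLt
  have : (i.val = k - 1 ∧ j.val = k) ∨ j.val = n - k := by omega
  rcases this with ⟨hi, hj⟩ | hj
  · left
    rw [show i = ⟨k - 1, by omega⟩ from Fin.ext hi, show j = ⟨k, by omega⟩ from Fin.ext hj]
  · right
    rw [show j = ⟨n - k, by omega⟩ from Fin.ext hj]
    simp

theorem add_one_le_card_sphere (hK : K.IsIsometricFilling n f) {k : ℕ} (hk : 1 ≤ k)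
    (hkn : 2 * k ≤ n) : min (2 * k) (n - 2 * k) + 1 ≤ #(K.sphere (f 0) k) := by
  obtain ⟨he₀, h₀⟩ := hK.boundaryEdge_isCrossingPair hk hkn
  obtain ⟨e, hne, hreach, he, h1⟩ := K.exists_isCrossingPair_reachable he₀ h₀
  have hmem := (hK.eq_or_mem_of_isCrossingPair hk hkn he h1).resolve_left hne
  have hdk : ∀ i : Fin n, i.val = k ∨ i.val = n - k → K.skeleton.dist (f 0) (f i) = k := by
    intro i hi
    rw [hK.dist_zero_left]
    omega
  have hsphere : (K.sphereGraph (f 0) k).Reachable (f ⟨k, by omega⟩) (f ⟨n - k, by omega⟩) :=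
    sphereGraph_reachable_of_reachable hreach he₀ (mem_insert_of_mem (mem_singleton_self _))
      (hdk _ (Or.inl rfl)) hmem (hdk _ (Or.inr rfl))
  obtain ⟨t, ht⟩ := card_pos.mp (h₀ ▸ Nat.one_pos)
  have hverts : f ⟨k, by omega⟩ ∈ K.verts :=
    K.mem_verts.mpr ⟨t, (mem_filter.mp ht).1, (mem_filter.mp ht).2 (by simp)⟩
  calc min (2 * k) (n - 2 * k) + 1
      = K.skeleton.dist (f ⟨k, by omega⟩) (f ⟨n - k, by omega⟩) + 1 := by
        rw [hK.2, cycleGraph_dist_eq, Fin.sub_val_of_le (by simp [Fin.le_def]; omega)]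
        have := Fin.val_sub_add_val_eq_or (n := n) ⟨k, by omega⟩ ⟨n - k, by omega⟩
        have := (Fin.sub (n := n) ⟨k, by omega⟩ ⟨n - k, by omega⟩).isLt
        simp only at *
        omega
    _ ≤ #(K.sphere (f 0) k) :=
      dist_add_one_le_card_sphere hsphere (mem_filter.mpr ⟨hverts, hdk _ (Or.inl rfl)⟩)

end AbstractTriangulation.IsIsometricFilling

theorem sq_le_four_mul_sum_min_add_one (m : ℕ) :
    m ^ 2 ≤ 4 * ∑ k ∈ range (m + 1), min k (m - k) + 1 := by
  induction m using Nat.twoStepInduction with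
  | zero => simp
  | one => simp [sum_range_succ]
  | more m ih _ =>
    have hshift : ∑ k ∈ range (m + 1), (min k (m - k) + 1) ≤
        ∑ k ∈ range (m + 2 + 1), min k (m + 2 - k) :=
      calc ∑ k ∈ range (m + 1), (min k (m - k) + 1)
          ≤ ∑ k ∈ range (m + 1), min (k + 1) (m + 2 - (k + 1)) :=
            sum_le_sum fun k hk => by
              rw [mem_range] at hk
              omega
        _ ≤ ∑ k ∈ range (m + 2), min (k + 1) (m + 2 - (k + 1)) :=
            sum_le_sum_of_subset (range_mono (by omega))
        _ = ∑ k ∈ range (m + 2 + 1), min k (m + 2 - k) := by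
            rw [sum_range_succ' (fun k => min k (m + 2 - k))]
            simp
    rw [sum_add_distrib, sum_const, card_range, smul_eq_mul, mul_one] at hshift
    have : (m + 2) ^ 2 = m ^ 2 + 4 * m + 4 := by ring
    omega

theorem sq_le_eight_mul_sum_min {n : ℕ} (hn : 4 ≤ n) :
    n ^ 2 ≤ 8 * ∑ k ∈ Icc 1 (n / 2), (min (2 * k) (n - 2 * k) + 1) := by
  set m := n / 2
  have hterm : ∀ k ∈ Icc 1 m, 2 * min k (m - k) + 1 ≤ min (2 * k) (n - 2 * k) + 1 := by
    intro k hk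
    rw [mem_Icc] at hk
    omega
  have hsum := sum_le_sum hterm
  rw [sum_add_distrib, ← mul_sum, sum_const, Nat.card_Icc, smul_eq_mul,
    mul_one, Nat.add_sub_cancel] at hsum
  have hrange : ∑ k ∈ range (m + 1), min k (m - k) = ∑ k ∈ Icc 1 m, min k (m - k) := by
    rw [range_eq_Ico, sum_eq_sum_Ico_succ_bot (by omega), Ico_add_one_right_eq_Icc]
    simp
  have hsq := sq_le_four_mul_sum_min_add_one m
  rw [hrange] at hsq
  have hn2 : n ^ 2 ≤ 4 * m ^ 2 + 4 * m + 1 := by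
    have : n ≤ 2 * m + 1 := by omega
    nlinarith
  omega

/-- Let `n ≥ 4`. If `K` is an isometric filling of the cycle
`C_n`, then `|V(K)| ≥ n²/8`. -/
theorem discreteGromov_isometric {V : Type} [DecidableEq V] [Fintype V]
    (n : ℕ) (hn : 4 ≤ n)
    (K : AbstractTriangulation V) (f : Fin n → V)
    (hK : K.IsIsometricFilling n f) :
    (n : ℝ) ^ 2 / 8 ≤ (K.verts.card : ℝ) := by
  have : NeZero n := ⟨by omega⟩
  have hcount : n ^ 2 ≤ 8 * #K.verts :=
    calc n ^ 2 ≤ 8 * ∑ k ∈ Icc 1 (n / 2), (min (2 * k) (n - 2 * k) + 1) :=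
          sq_le_eight_mul_sum_min hn
      _ ≤ 8 * ∑ k ∈ Icc 1 (n / 2), #(K.sphere (f 0) k) := by
        gcongr with k hk
        rw [mem_Icc] at hk
        exact hK.add_one_le_card_sphere hk.1 (by omega)
      _ ≤ 8 * #K.verts := by
        gcongr
        exact K.sum_card_sphere_le (f 0) _
  have : (n : ℝ) ^ 2 ≤ 8 * #K.verts := by exact_mod_cast hcount
  linarith
end

section
/- Let n ≥ 4 be an integer, fix vertices x, y of the cycle graph C_n that are not adjacent in C_n, and let L and R denote the two connected components of C_n − x − y. If ℓ_1, …, ℓ_k are distinct vertices of L and r_1, …, r_k are distinct vertices of R, then ∑_{i=1}^k d_{C_n}(ℓ_i, r_i) ≥ k(k+2)/2. -/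
open SimpleGraph Finset

/-- The cycle graph `C_n` with the vertices `x` and `y` deleted (as a graph on
`Fin n` in which `x` and `y` have become isolated). -/
def deletedCycle (n : ℕ) (x y : Fin n) : SimpleGraph (Fin n) where
  Adj u v := (SimpleGraph.cycleGraph n).Adj u v ∧ u ≠ x ∧ u ≠ y ∧ v ≠ x ∧ v ≠ y
  symm := ⟨by rintro u v ⟨h, h1, h2, h3, h4⟩; exact ⟨h.symm, h3, h4, h1, h2⟩⟩
  loopless := ⟨by rintro u ⟨h, -⟩; exact h.ne rfl⟩

/-!
Measure positions from `x`, so that `y` sits at position `μ` with `2 ≤ μ ≤ n - 2`. Walks in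
`C_n - x - y` never cross positions `0` or `μ`, so `L` and `R` each lie in one of the arcs
`(0, μ)`, `(μ, n)`; since together they cover both arcs, they lie in different ones. Circular
distance from `ℓᵢ` is 1-Lipschitz along edges, so `d(ℓᵢ, rᵢ)` is at least the distance from `ℓᵢ`
to the ends of its arc plus the same quantity for `rᵢ`. On an arc each such value is taken at most
twice, and `k` positive integers taking each value at most twice sum to at least `k(k+2)/4`.
-/

theorem Finset.card_mul_card_add_two_le_four_mul_sum {ι : Type*} (s : Finset ι) (f : ι → ℕ)
    (hpos : ∀ i ∈ s, 0 < f i) (hfiber : ∀ v, #{i ∈ s | f i = v} ≤ 2) :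
    #s * (#s + 2) ≤ 4 * ∑ i ∈ s, f i := by
  classical
  induction s using Finset.strongInduction with
  | H s ih =>
  rcases s.eq_empty_or_nonempty with rfl | hs
  · simp
  obtain ⟨i, hi, hmax⟩ := s.exists_max_image f hs
  set top := {j ∈ s | f j = f i}
  set rest := {j ∈ s | f j ≠ f i}
  have hrest_fiber (v : ℕ) : #{j ∈ rest | f j = v} ≤ 2 :=
    (card_le_card (filter_subset_filter _ (filter_subset _ _))).trans (hfiber v)
  have ih_rest := ih rest (filter_ssubset.2 ⟨i, hi, by simp⟩)
    (fun j hj => hpos j (filter_subset _ _ hj)) hrest_fiber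
  have hrest_card : #rest + 2 ≤ 2 * f i := by
    calc #rest + 2 ≤ 2 * #(rest.image f) + 2 :=
          add_le_add_left (card_le_mul_card_image _ _ fun v _ => hrest_fiber v) _
      _ ≤ 2 * #(Icc 1 (f i - 1)) + 2 := by
          gcongr
          intro v hv
          obtain ⟨j, hj, rfl⟩ := mem_image.1 hv
          obtain ⟨hjs, hji⟩ := mem_filter.1 hj
          have := hpos j hjs
          have := hmax j hjs
          simp only [mem_Icc]
          omega
      _ = 2 * f i := by have := hpos i hi; simp; omega
  have htop_le : #top ≤ 2 := hfiber (f i)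
  have hcard : #top + #rest = #s := card_filter_add_card_filter_not _
  have hsum : ∑ j ∈ s, f j = #top * f i + ∑ j ∈ rest, f j := by
    rw [← sum_filter_add_sum_filter_not s (fun j => f j = f i), sum_congr rfl
      (fun j hj => (mem_filter.1 hj).2), sum_const, smul_eq_mul]
  rw [← hcard, hsum]
  nlinarith [Nat.mul_le_mul_left #top (show 2 * #rest + #top + 2 ≤ 4 * f i by omega)]

theorem Finset.card_mul_card_add_two_le_four_mul_sum_min {ι : Type*} (s : Finset ι) (a : ι → ℕ)
    (ha : Set.InjOn a s) {α β : ℕ} (hmem : ∀ i ∈ s, α < a i ∧ a i < β) :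
    #s * (#s + 2) ≤ 4 * ∑ i ∈ s, min (a i - α) (β - a i) := by
  refine card_mul_card_add_two_le_four_mul_sum s _ (fun i hi => by have := hmem i hi; omega)
    fun v => ?_
  calc #{i ∈ s | min (a i - α) (β - a i) = v} ≤ #{α + v, β - v} := by
        refine card_le_card_of_injOn a (fun i hi => ?_) (ha.mono (coe_subset.2 (filter_subset _ _)))
        simp only [coe_filter, Set.mem_ofPred_eq] at hi
        have := hmem i hi.1
        simp only [coe_insert, coe_singleton, Set.mem_insert_iff, Set.mem_singleton_iff]
        omega
    _ ≤ 2 := card_le_two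

theorem SimpleGraph.Reachable.iff_of_adj {V : Type*} {G : SimpleGraph V} (P : V → Prop)
    (hP : ∀ a b, G.Adj a b → (P a ↔ P b)) {u v : V} (h : G.Reachable u v) : P u ↔ P v := by
  obtain ⟨W⟩ := h
  induction W with
  | nil => rfl
  | cons hadj _ ih => exact (hP _ _ hadj).trans ih

theorem SimpleGraph.Reachable.le_add_dist {V : Type*} {G : SimpleGraph V} (φ : V → ℕ)
    (hφ : ∀ a b, G.Adj a b → φ b ≤ φ a + 1) {u v : V} (h : G.Reachable u v) :
    φ v ≤ φ u + G.dist u v := by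
  obtain ⟨W, hW⟩ := h.exists_walk_length_eq_dist
  rw [← hW]
  clear hW h
  induction W with
  | nil => simp
  | @cons a b c hadj p ih => have := hφ a b hadj; rw [Walk.length_cons]; omega

section Positions

variable {n : ℕ} [NeZero n]

theorem SimpleGraph.cycleGraph_adj_sub_val {x a b : Fin n} (h : (cycleGraph n).Adj a b) :
    (b - x).val = (a - x).val + 1 ∨ (a - x).val = (b - x).val + 1 ∨
      ((a - x).val = 0 ∧ (b - x).val = n - 1) ∨ ((b - x).val = 0 ∧ (a - x).val = n - 1) := by
  suffices key : ∀ a b : Fin n, (b - a).val = 1 →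
      (b - x).val = (a - x).val + 1 ∨ ((b - x).val = 0 ∧ (a - x).val = n - 1) by
    rcases cycleGraph_adj'.1 h with h | h
    · have := key b a h; omega
    · have := key a b h; omega
  intro a b hab
  have hb : (b - x).val = ((a - x).val + 1) % n := by
    rw [← sub_add_sub_cancel b a x, Fin.val_add, hab, add_comm]
  have := (a - x).isLt
  rcases (show (a - x).val + 1 < n ∨ (a - x).val + 1 = n by omega) with hlt | heq
  · exact .inl (hb.trans (Nat.mod_eq_of_lt hlt))
  · exact .inr ⟨by rw [hb, heq, Nat.mod_self], by omega⟩

theorem SimpleGraph.min_sub_val_le_cycleGraph_dist (u v : Fin n) :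
    min (v - u).val (n - (v - u).val) ≤ (cycleGraph n).dist u v := by
  have := (cycleGraph_preconnected u v).le_add_dist (fun w => min (w - u).val (n - (w - u).val))
    (fun a b hab => by have := cycleGraph_adj_sub_val (x := u) hab; omega)
  simpa using this

theorem sub_val_ne_of_ne {x a b : Fin n} (h : a ≠ b) : (a - x).val ≠ (b - x).val :=
  Fin.val_injective.ne (sub_left_injective.ne h)

theorem deletedCycle_reachable_sub_val_lt_iff {x y u v : Fin n}
    (h : (deletedCycle n x y).Reachable u v) :
    (u - x).val < (y - x).val ↔ (v - x).val < (y - x).val := by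
  refine h.iff_of_adj (fun w => (w - x).val < (y - x).val) fun a b hab => ?_
  obtain ⟨hadj, hax, hay, hbx, hby⟩ := hab
  have := cycleGraph_adj_sub_val (x := x) hadj
  have := sub_val_ne_of_ne (x := x) hax
  have := sub_val_ne_of_ne (x := x) hbx
  have := sub_val_ne_of_ne (x := x) hay
  have := sub_val_ne_of_ne (x := x) hby
  simp only [sub_self, Fin.val_zero] at *
  omega

theorem sub_val_add_one {x a : Fin n} (h : (a - x).val + 1 < n) :
    (a + 1 - x).val = (a - x).val + 1 := by
  rw [add_sub_right_comm, Fin.val_add, Fin.val_one', Nat.mod_eq_of_lt (a := 1) (by omega),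
    Nat.mod_eq_of_lt h]

theorem two_le_sub_val_of_not_adj {x y : Fin n} (hxy : x ≠ y)
    (hnadj : ¬ (cycleGraph n).Adj x y) : 2 ≤ (y - x).val ∧ (y - x).val + 2 ≤ n := by
  have hpos : (y - x).val ≠ 0 := by simpa using sub_val_ne_of_ne (x := x) hxy.symm
  have hneg : (x - y).val = n - (y - x).val := by
    rw [← sub_sub_sub_cancel_right x y x, sub_self, Fin.coe_sub_iff_lt.2]
    · simp
    · exact Fin.val_pos_iff.1 (Nat.pos_of_ne_zero hpos)
  have := (y - x).isLt
  rw [cycleGraph_adj'] at hnadj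
  omega

theorem sub_val_lt_iff_not_of_cover {x y : Fin n} (hμ : 2 ≤ (y - x).val ∧ (y - x).val + 2 ≤ n)
    {L R : Set (Fin n)} (hcover : ∀ u : Fin n, u ≠ x → u ≠ y → u ∈ L ∨ u ∈ R)
    (hLconn : ∀ u ∈ L, ∀ v ∈ L, (deletedCycle n x y).Reachable u v)
    (hRconn : ∀ u ∈ R, ∀ v ∈ R, (deletedCycle n x y).Reachable u v)
    {u v : Fin n} (hu : u ∈ L) (hv : v ∈ R) :
    (u - x).val < (y - x).val ↔ ¬ (v - x).val < (y - x).val := by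
  have hsideL (w) (hw : w ∈ L) := deletedCycle_reachable_sub_val_lt_iff (hLconn w hw u hu)
  have hsideR (w) (hw : w ∈ R) := deletedCycle_reachable_sub_val_lt_iff (hRconn w hw v hv)
  have hx₁ : (x + 1 - x).val = 1 := by
    simpa using sub_val_add_one (x := x) (a := x) (by simp; omega)
  have hy₁ : (y + 1 - x).val = (y - x).val + 1 := sub_val_add_one (by omega)
  have hlow : (x + 1 - x).val < (y - x).val := by omega
  have hhigh : ¬ (y + 1 - x).val < (y - x).val := by omega
  have h₁ := (hcover (x + 1) (fun h => by simp [h] at hx₁) (fun h => by rw [h] at hx₁; omega)).imp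
    (fun h => (hsideL _ h).1 hlow) (fun h => (hsideR _ h).1 hlow)
  have h₂ := (hcover (y + 1) (fun h => by simp [h] at hy₁) (fun h => by simp [h] at hy₁)).imp
    (fun h => (hsideL _ h).not.1 hhigh) (fun h => (hsideR _ h).not.1 hhigh)
  tauto

theorem mul_add_two_le_two_mul_sum_cycleGraph_dist {x y : Fin n} {k : ℕ} (ℓ r : Fin k → Fin n)
    (hℓinj : Function.Injective ℓ) (hrinj : Function.Injective r)
    (hℓ : ∀ i, ℓ i ≠ x ∧ ℓ i ≠ y) (hr : ∀ i, r i ≠ x ∧ r i ≠ y)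
    (hℓlow : ∀ i, (ℓ i - x).val < (y - x).val) (hrhigh : ∀ i, (y - x).val ≤ (r i - x).val) :
    k * (k + 2) ≤ 2 * ∑ i, (cycleGraph n).dist (ℓ i) (r i) := by
  have hpos {u : Fin n} (hu : u ≠ x ∧ u ≠ y) : 0 < (u - x).val ∧ (u - x).val ≠ (y - x).val :=
    ⟨by simpa [Nat.pos_iff_ne_zero] using sub_val_ne_of_ne (x := x) hu.1, sub_val_ne_of_ne hu.2⟩
  have hinj {f : Fin k → Fin n} (hf : Function.Injective f) :
      Set.InjOn (fun i => (f i - x).val) (univ : Finset (Fin k)) :=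
    (Fin.val_injective.comp (sub_left_injective.comp hf)).injOn
  have hL := card_mul_card_add_two_le_four_mul_sum_min univ _ (hinj hℓinj) (α := 0)
    (β := (y - x).val) fun i _ => ⟨(hpos (hℓ i)).1, hℓlow i⟩
  have hR := card_mul_card_add_two_le_four_mul_sum_min univ _ (hinj hrinj) (β := n)
    fun i _ => ⟨(hrhigh i).lt_of_ne (hpos (hr i)).2.symm, (r i - x).isLt⟩
  have hdist (i : Fin k) : min ((ℓ i - x).val - 0) ((y - x).val - (ℓ i - x).val) +
      min ((r i - x).val - (y - x).val) (n - (r i - x).val) ≤ (cycleGraph n).dist (ℓ i) (r i) := by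
    have h := min_sub_val_le_cycleGraph_dist (ℓ i) (r i)
    have := hℓlow i
    have := hrhigh i
    have := (r i - x).isLt
    rw [← sub_sub_sub_cancel_right (r i) (ℓ i) x, Fin.sub_val_of_le (Fin.le_def.2 (by omega))] at h
    omega
  have := sum_le_sum fun i (_ : i ∈ univ) => hdist i
  rw [sum_add_distrib] at this
  simp only [card_univ, Fintype.card_fin] at hL hR
  omega

end Positions

theorem pathSum_general (n : ℕ) (hn : 4 ≤ n)
    (x y : Fin n) (hxy : x ≠ y) (hnadj : ¬ (SimpleGraph.cycleGraph n).Adj x y)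
    (L R : Set (Fin n))
    (hxL : x ∉ L) (hyL : y ∉ L) (hxR : x ∉ R) (hyR : y ∉ R)
    (hcover : ∀ u : Fin n, u ≠ x → u ≠ y → u ∈ L ∨ u ∈ R)
    (hLconn : ∀ u ∈ L, ∀ v ∈ L, (deletedCycle n x y).Reachable u v)
    (hRconn : ∀ u ∈ R, ∀ v ∈ R, (deletedCycle n x y).Reachable u v)
    (k : ℕ) (ℓ r : Fin k → Fin n)
    (hℓL : ∀ i, ℓ i ∈ L) (hrR : ∀ i, r i ∈ R)
    (hℓinj : Function.Injective ℓ) (hrinj : Function.Injective r) :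
    k * (k + 2) ≤ 2 * ∑ i : Fin k, (SimpleGraph.cycleGraph n).dist (ℓ i) (r i) := by
  have : NeZero n := ⟨by omega⟩
  have hside (i j : Fin k) := sub_val_lt_iff_not_of_cover (two_le_sub_val_of_not_adj hxy hnadj)
    hcover hLconn hRconn (hℓL i) (hrR j)
  have hℓ (i : Fin k) :=
    And.intro (ne_of_mem_of_not_mem (hℓL i) hxL) (ne_of_mem_of_not_mem (hℓL i) hyL)
  have hr (i : Fin k) :=
    And.intro (ne_of_mem_of_not_mem (hrR i) hxR) (ne_of_mem_of_not_mem (hrR i) hyR)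
  by_cases hlow : ∀ i, (ℓ i - x).val < (y - x).val
  · exact mul_add_two_le_two_mul_sum_cycleGraph_dist ℓ r hℓinj hrinj hℓ hr hlow
      fun j => not_lt.1 ((hside j j).1 (hlow j))
  · obtain ⟨i, hi⟩ := not_forall.1 hlow
    have hri : (r i - x).val < (y - x).val := not_not.1 ((hside i i).not.1 hi)
    simp_rw [dist_comm (u := ℓ _)]
    exact mul_add_two_le_two_mul_sum_cycleGraph_dist r ℓ hrinj hℓinj hr hℓ
      (fun j => not_not.1 ((hside i j).not.1 hi)) fun j => not_lt.1 fun h => (hside j i).1 h hri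

/-- Let `x,y` be nonadjacent vertices of `C_n` (`n ≥ 4`) and
`L,R` the two connected components of `C_n - x - y`. If `ℓ₁,…,ℓ_k ∈ L` are
distinct and `r₁,…,r_k ∈ R` are distinct, then
`∑ d_{C_n}(ℓᵢ,rᵢ) ≥ k(k+2)/2`. -/
theorem pathSum (n : ℕ) (hn : 4 ≤ n)
    (x y : Fin n) (hxy : x ≠ y) (hnadj : ¬ (SimpleGraph.cycleGraph n).Adj x y)
    (L R : Set (Fin n))
    (hLne : L.Nonempty) (hRne : R.Nonempty) (hdisj : Disjoint L R)
    (hxL : x ∉ L) (hyL : y ∉ L) (hxR : x ∉ R) (hyR : y ∉ R)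
    (hcover : ∀ u : Fin n, u ≠ x → u ≠ y → u ∈ L ∨ u ∈ R)
    (hLconn : ∀ u ∈ L, ∀ v ∈ L, (deletedCycle n x y).Reachable u v)
    (hRconn : ∀ u ∈ R, ∀ v ∈ R, (deletedCycle n x y).Reachable u v)
    (hLR : ∀ u ∈ L, ∀ v ∈ R, ¬ (deletedCycle n x y).Reachable u v)
    (k : ℕ) (ℓ r : Fin k → Fin n)
    (hℓL : ∀ i, ℓ i ∈ L) (hrR : ∀ i, r i ∈ R)
    (hℓinj : Function.Injective ℓ) (hrinj : Function.Injective r) :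
    k * (k + 2) ≤ 2 * ∑ i : Fin k, (SimpleGraph.cycleGraph n).dist (ℓ i) (r i) :=
  pathSum_general n hn x y hxy hnadj L R hxL hyL hxR hyR hcover hLconn hRconn k ℓ r hℓL hrR hℓinj
    hrinj
end
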